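/- Given d+1 mutually unbiased bases {|x_b⟩ : x ∈ {0,1}^n} (b ∈ [d+1]) of ℂ^d with d = 2^n, the d^2 matrices consisting of the identity together with S_b^j = Σ_{x∈{0,1}^n} (−1)^{j·x} |x_b⟩⟨x_b| for b ∈ [d+1] and j ∈ {0,1}^n \ {0} form an orthogonal basis (with respect to the Hilbert–Schmidt inner product) of the space of d×d matrices; moreover each S_b^j is traceless, Hermitian, and satisfies (S_b^j)^2 = I. -/

import Mathlib

noncomputable section

open Matrix

/-- The sign `(-1)^{j·x}` for bit strings `j, x ∈ {0,1}ⁿ` (bitwise inner product mod 2). -/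
def mubSign {n : ℕ} (j x : Fin n → ZMod 2) : ℂ :=
  (-1 : ℂ) ^ (∑ i, (j i * x i).val)

/-- The rank-one projector `|x_b⟩⟨x_b|` as a matrix. -/
def outer {n : ℕ} (w : EuclideanSpace ℂ (Fin (2 ^ n))) :
    Matrix (Fin (2 ^ n)) (Fin (2 ^ n)) ℂ :=
  Matrix.vecMulVec (fun i => w i) (fun i => starRingEnd ℂ (w i))

/-- The MUB operator basis element `S_b^j = Σ_x (-1)^{j·x} |x_b⟩⟨x_b|`. -/
def mubS {n : ℕ} (v : Fin (2 ^ n + 1) → (Fin n → ZMod 2) → EuclideanSpace ℂ (Fin (2 ^ n)))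
    (b : Fin (2 ^ n + 1)) (j : Fin n → ZMod 2) :
    Matrix (Fin (2 ^ n)) (Fin (2 ^ n)) ℂ :=
  ∑ x, mubSign j x • outer (v b x)

/-- The family consisting of the identity together with the `S_b^j` for `j ≠ 0`. -/
def mubFamily {n : ℕ}
    (v : Fin (2 ^ n + 1) → (Fin n → ZMod 2) → EuclideanSpace ℂ (Fin (2 ^ n)))
    (o : Option (Fin (2 ^ n + 1) × {j : Fin n → ZMod 2 // j ≠ 0})) :
    Matrix (Fin (2 ^ n)) (Fin (2 ^ n)) ℂ :=
  o.elim 1 fun p => mubS v p.1 p.2.1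

/-!
For a fixed basis `b`, the map `j ↦ S_b^j` is a representation of `(ℤ/2)ⁿ` by involutions that are
diagonal in that basis: `S_b^j S_b^{j'} = S_b^{j+j'}`, and `S_b^0 = 1` by completeness of the basis.
So Hilbert–Schmidt products within one basis are character sums `∑ₓ (-1)^{(j+j')·x}`, which vanish
unless `j = j'`. Across two bases, unbiasedness makes `|⟨x_b|x'_{b'}⟩|²` constant, so
`tr (S_b^j S_{b'}^{j'})` is a multiple of `(∑ₓ (-1)^{j·x}) (∑_{x'} (-1)^{j'·x'}) = 0`. The `d²`
matrices are therefore pairwise orthogonal with nonzero norms, hence linearly independent, and they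
span by a dimension count.
-/

lemma neg_one_pow_val_add {R : Type*} [Ring R] (a b : ZMod 2) :
    (-1 : R) ^ (a + b).val = (-1) ^ a.val * (-1) ^ b.val := by
  rw [ZMod.val_add, ← neg_one_pow_eq_pow_mod_two, pow_add]

theorem Matrix.linearIndependent_of_trace_mul_eq_zero {K m ι : Type*} [Field K] [Fintype m]
    {f : ι → Matrix m m K} (horth : Pairwise fun i i' => (f i * f i').trace = 0)
    (hself : ∀ i, (f i * f i).trace ≠ 0) : LinearIndependent K f :=
  LinearMap.BilinForm.linearIndependent_of_iIsOrtho
    (B := (LinearMap.mul K (Matrix m m K)).compr₂ (traceLinearMap m K K)) horth hself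

lemma mubSign_eq_neg_one_pow_dotProduct {n : ℕ} (j x : Fin n → ZMod 2) :
    mubSign j x = (-1) ^ (j ⬝ᵥ x).val := by
  rw [mubSign, neg_one_pow_eq_pow_mod_two, ← ZMod.val_natCast, Nat.cast_sum]
  simp only [ZMod.natCast_val, ZMod.cast_id', id, dotProduct]

def mubSignChar {n : ℕ} (j : Fin n → ZMod 2) : AddChar (Fin n → ZMod 2) ℂ where
  toFun := mubSign j
  map_zero_eq_one' := by simp [mubSign_eq_neg_one_pow_dotProduct]
  map_add_eq_mul' x y := by
    simp only [mubSign_eq_neg_one_pow_dotProduct, dotProduct_add, neg_one_pow_val_add]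

lemma mubSign_add_left {n : ℕ} (j j' x : Fin n → ZMod 2) :
    mubSign (j + j') x = mubSign j x * mubSign j' x := by
  simp only [mubSign_eq_neg_one_pow_dotProduct, add_dotProduct, neg_one_pow_val_add]

lemma mubSign_zero_left {n : ℕ} (x : Fin n → ZMod 2) : mubSign 0 x = 1 := by
  simp [mubSign_eq_neg_one_pow_dotProduct]

lemma isSelfAdjoint_mubSign {n : ℕ} (j x : Fin n → ZMod 2) : IsSelfAdjoint (mubSign j x) := by
  simp [IsSelfAdjoint, mubSign]

lemma sum_mubSign_eq_zero {n : ℕ} {j : Fin n → ZMod 2} (hj : j ≠ 0) : ∑ x, mubSign j x = 0 := by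
  obtain ⟨i, hi⟩ : ∃ i, j i ≠ 0 := Function.ne_iff.mp hj
  have hji : j i = 1 := by
    generalize j i = a at hi
    revert a; decide
  refine AddChar.sum_eq_zero_of_ne_one (ψ := mubSignChar j)
    (AddChar.ne_one_iff.mpr ⟨Pi.single i 1, ?_⟩)
  show mubSign j (Pi.single i 1) ≠ 1
  rw [mubSign_eq_neg_one_pow_dotProduct, dotProduct_single, mul_one, hji, ZMod.val_one]
  norm_num

section Outer

variable {n : ℕ}

lemma isHermitian_outer (w : EuclideanSpace ℂ (Fin (2 ^ n))) : (outer w).IsHermitian := by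
  ext i k
  simp [outer, vecMulVec_apply, mul_comm]

lemma trace_outer (w : EuclideanSpace ℂ (Fin (2 ^ n))) : (outer w).trace = inner ℂ w w := by
  simp only [trace, diag_apply, outer, vecMulVec_apply, PiLp.inner_apply, RCLike.inner_apply]

lemma outer_mul_outer (w w' : EuclideanSpace ℂ (Fin (2 ^ n))) :
    outer w * outer w' =
      inner ℂ w w' • vecMulVec (fun i => w i) (fun i => starRingEnd ℂ (w' i)) := by
  ext i k
  simp only [mul_apply, outer, vecMulVec_apply, Matrix.smul_apply, smul_eq_mul, PiLp.inner_apply,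
    RCLike.inner_apply, Finset.sum_mul]
  exact Finset.sum_congr rfl fun m _ => by ring

lemma trace_outer_mul_outer (w w' : EuclideanSpace ℂ (Fin (2 ^ n))) :
    (outer w * outer w').trace = (‖inner ℂ w w'‖ : ℂ) ^ 2 := by
  rw [← Complex.mul_conj', inner_conj_symm, outer_mul_outer, trace_smul, smul_eq_mul]
  -- the trace of `vecMulVec w (conj w')` is `⟪w', w⟫` on the nose
  congr 1

lemma outer_mul_outer_of_orthonormal {κ : Type*} [DecidableEq κ]
    {u : κ → EuclideanSpace ℂ (Fin (2 ^ n))} (hu : Orthonormal ℂ u) (x x' : κ) :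
    outer (u x) * outer (u x') = if x = x' then outer (u x) else 0 := by
  rw [outer_mul_outer, orthonormal_iff_ite.mp hu x x']
  split_ifs with h
  · subst h; exact one_smul ..
  · simp

lemma sum_outer_eq_one {κ : Type*} [Fintype κ] [DecidableEq κ]
    {u : κ → EuclideanSpace ℂ (Fin (2 ^ n))} (hu : Orthonormal ℂ u)
    (hκ : Fintype.card κ = 2 ^ n) : ∑ x, outer (u x) = 1 := by
  let U : Matrix (Fin (2 ^ n)) κ ℂ := of fun i x => u x i
  have hUU : Uᴴ * U = 1 := by
    ext x x'
    simp [U, mul_apply, one_apply, ← orthonormal_iff_ite.mp hu x x', PiLp.inner_apply, mul_comm]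
  calc ∑ x, outer (u x) = U * Uᴴ := by
        ext i k
        simp [U, outer, Matrix.sum_apply, vecMulVec_apply, mul_apply]
    _ = 1 := (mul_eq_one_comm_of_card_eq _ _ _ (by simp [hκ])).mpr hUU

end Outer

section MubS

variable {n : ℕ} {v : Fin (2 ^ n + 1) → (Fin n → ZMod 2) → EuclideanSpace ℂ (Fin (2 ^ n))}

lemma isHermitian_mubS (b : Fin (2 ^ n + 1)) (j : Fin n → ZMod 2) : (mubS v b j).IsHermitian :=
  isSelfAdjoint_sum _ fun x _ => (isSelfAdjoint_mubSign j x).smul (isHermitian_outer (v b x))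

lemma trace_mubS {b : Fin (2 ^ n + 1)} (hv : Orthonormal ℂ (v b)) (j : Fin n → ZMod 2) :
    (mubS v b j).trace = ∑ x, mubSign j x := by
  simp [mubS, trace_sum, trace_smul, trace_outer, hv.1]

lemma mubS_zero {b : Fin (2 ^ n + 1)} (hv : Orthonormal ℂ (v b)) : mubS v b 0 = 1 := by
  simpa [mubS, mubSign_zero_left] using sum_outer_eq_one hv (by simp)

lemma mubS_mul_mubS {b : Fin (2 ^ n + 1)} (hv : Orthonormal ℂ (v b)) (j j' : Fin n → ZMod 2) :
    mubS v b j * mubS v b j' = mubS v b (j + j') := by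
  simp only [mubS, Finset.sum_mul, Finset.mul_sum, smul_mul_smul_comm,
    outer_mul_outer_of_orthonormal hv, smul_ite, smul_zero, Finset.sum_ite_eq', Finset.mem_univ,
    if_true, mubSign_add_left]

lemma mubS_mul_self {b : Fin (2 ^ n + 1)} (hv : Orthonormal ℂ (v b)) (j : Fin n → ZMod 2) :
    mubS v b j * mubS v b j = 1 := by
  rw [mubS_mul_mubS hv, show j + j = 0 from funext fun i => CharTwo.add_self_eq_zero (j i),
    mubS_zero hv]

lemma trace_mubS_eq_zero {b : Fin (2 ^ n + 1)} (hv : Orthonormal ℂ (v b)) {j : Fin n → ZMod 2}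
    (hj : j ≠ 0) : (mubS v b j).trace = 0 := by
  rw [trace_mubS hv, sum_mubSign_eq_zero hj]

lemma trace_mubS_mul_mubS_of_ne {b : Fin (2 ^ n + 1)} (hv : Orthonormal ℂ (v b))
    {j j' : Fin n → ZMod 2} (hjj' : j ≠ j') : (mubS v b j * mubS v b j').trace = 0 := by
  refine (mubS_mul_mubS hv j j').symm ▸ trace_mubS_eq_zero hv fun h => hjj' ?_
  exact funext fun i => CharTwo.add_eq_zero.mp (congrFun h i)

lemma trace_mubS_mul_mubS_of_unbiased {b b' : Fin (2 ^ n + 1)} {c : ℝ}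
    (hc : ∀ x x', ‖inner ℂ (v b x) (v b' x')‖ ^ 2 = c) {j : Fin n → ZMod 2} (hj : j ≠ 0)
    (j' : Fin n → ZMod 2) : (mubS v b j * mubS v b' j').trace = 0 := by
  calc (mubS v b j * mubS v b' j').trace
      = ∑ x, ∑ x', mubSign j x * mubSign j' x' * (‖inner ℂ (v b x) (v b' x')‖ : ℂ) ^ 2 := by
        simp only [mubS, Finset.sum_mul, Finset.mul_sum, smul_mul_smul_comm, trace_sum,
          trace_smul, trace_outer_mul_outer, smul_eq_mul]
        exact Finset.sum_comm
    _ = (∑ x, mubSign j x) * (∑ x', mubSign j' x') * c := by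
        simp only [← Complex.ofReal_pow, hc, Finset.sum_mul, Finset.mul_sum]
        exact Finset.sum_comm
    _ = 0 := by rw [sum_mubSign_eq_zero hj, zero_mul, zero_mul]

end MubS

section MubFamily

variable {n : ℕ} {v : Fin (2 ^ n + 1) → (Fin n → ZMod 2) → EuclideanSpace ℂ (Fin (2 ^ n))}
  {c : ℝ}

lemma trace_mubS_mul_mubS_eq_zero (horth : ∀ b, Orthonormal ℂ (v b))
    (hmub : ∀ b b', b ≠ b' → ∀ x x', ‖inner ℂ (v b x) (v b' x')‖ ^ 2 = c)
    {b b' : Fin (2 ^ n + 1)} {j j' : Fin n → ZMod 2} (hj : j ≠ 0) (hne : (b, j) ≠ (b', j')) :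
    (mubS v b j * mubS v b' j').trace = 0 := by
  by_cases hb : b = b'
  · subst hb
    exact trace_mubS_mul_mubS_of_ne (horth b) fun h => hne (h ▸ rfl)
  · exact trace_mubS_mul_mubS_of_unbiased (hmub b b' hb) hj j'

lemma trace_mubFamily_mul_mubFamily (horth : ∀ b, Orthonormal ℂ (v b))
    (hmub : ∀ b b', b ≠ b' → ∀ x x', ‖inner ℂ (v b x) (v b' x')‖ ^ 2 = c)
    (o o' : Option (Fin (2 ^ n + 1) × {j : Fin n → ZMod 2 // j ≠ 0})) :
    (mubFamily v o * mubFamily v o').trace = if o = o' then (2 ^ n : ℂ) else 0 := by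
  rcases o with _ | ⟨b, j, hj⟩ <;> rcases o' with _ | ⟨b', j', hj'⟩
  · simp [mubFamily]
  · simpa [mubFamily] using trace_mubS_eq_zero (horth b') hj'
  · simpa [mubFamily] using trace_mubS_eq_zero (horth b) hj
  · by_cases hne : (b, j) = (b', j')
    · obtain ⟨rfl, rfl⟩ := Prod.ext_iff.mp hne
      simp [mubFamily, mubS_mul_self (horth b)]
    · rw [if_neg (by simpa [Subtype.ext_iff] using hne)]
      exact trace_mubS_mul_mubS_eq_zero horth hmub hj hne

end MubFamily

lemma card_option_prod_subtype_ne_zero {n : ℕ} :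
    Fintype.card (Option (Fin (2 ^ n + 1) × {j : Fin n → ZMod 2 // j ≠ 0})) = 2 ^ n * 2 ^ n := by
  obtain ⟨d, hd⟩ : ∃ d, 2 ^ n = d + 1 := Nat.exists_eq_add_one.mpr (Nat.two_pow_pos n)
  simp [Fintype.card_subtype_compl, hd]
  ring

/-- Given `d + 1` mutually unbiased bases of `ℂ^d`, `d = 2ⁿ`, the identity together with
the matrices `S_b^j` (`j ≠ 0`) forms an orthogonal basis (w.r.t. the Hilbert–Schmidt inner
product) of the space of `d × d` matrices; each `S_b^j` is Hermitian, traceless, and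
squares to the identity. -/
theorem mub_operator_basis {n : ℕ}
    (v : Fin (2 ^ n + 1) → (Fin n → ZMod 2) → EuclideanSpace ℂ (Fin (2 ^ n)))
    (horth : ∀ b, Orthonormal ℂ (v b))
    (hmub : ∀ b b', b ≠ b' → ∀ x x',
      ‖(inner ℂ (v b x) (v b' x') : ℂ)‖ ^ 2 = 1 / (2 ^ n : ℝ)) :
    (∀ b j, j ≠ 0 →
      (mubS v b j).IsHermitian ∧ (mubS v b j).trace = 0 ∧
        mubS v b j * mubS v b j = 1) ∧
    (∀ b b' j j', j ≠ 0 → j' ≠ 0 → (b, j) ≠ (b', j') →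
      (mubS v b j * mubS v b' j').trace = 0) ∧
    LinearIndependent ℂ (mubFamily v) ∧
    Submodule.span ℂ (Set.range (mubFamily v)) = ⊤ := by
  have hgram := trace_mubFamily_mul_mubFamily horth hmub
  have hli : LinearIndependent ℂ (mubFamily v) :=
    Matrix.linearIndependent_of_trace_mul_eq_zero (fun o o' h => (hgram o o').trans (if_neg h))
      fun o => by simp [hgram]
  refine ⟨fun b j hj => ⟨isHermitian_mubS b j, trace_mubS_eq_zero (horth b) hj,
      mubS_mul_self (horth b) j⟩,
    fun b b' j j' hj _ hne => trace_mubS_mul_mubS_eq_zero horth hmub hj hne,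
    hli, hli.span_eq_top_of_card_eq_finrank ?_⟩
  rw [card_option_prod_subtype_ne_zero, Module.finrank_matrix]
  simp
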